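/- Let p be a prime, n ≥ 1, and let 𝔖 be a subsemigroup of GL(n, ℚ_p). Then the family of maps {T̄ : T ∈ 𝔖} acts distally on S_n if and only if the family {T̄ : T ∈ G} acts distally on S_n, where G is the subgroup of GL(n, ℚ_p) generated by 𝔖. -/

import Mathlib

open scoped MatrixGroups

/-- The real number `r`, assumed to be an integer power of `p`, interpreted as the
corresponding scalar in `ℚ_p` (junk value otherwise). -/
noncomputable def realToPadic (p : ℕ) [Fact p.Prime] (r : ℝ) : ℚ_[p] :=
  (p : ℚ_[p]) ^ ⌊Real.logb p r⌋

/-- The map `T̄` induced on the `p`-adic unit sphere by the matrix `T`: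
`T̄(x) = ‖T(x)‖_p ⬝ T(x)`. -/
noncomputable def sphereMap (p : ℕ) [Fact p.Prime] {n : ℕ}
    (T : Matrix (Fin n) (Fin n) ℚ_[p]) (y : Fin n → ℚ_[p]) : Fin n → ℚ_[p] :=
  realToPadic p ‖T.mulVec y‖ • T.mulVec y

/-- A family `S` of self-maps acts distally on an invariant subset `A`. -/
def ActsDistallyOn {X : Type*} [TopologicalSpace X] (S : Set (X → X)) (A : Set X) : Prop :=
  ∀ x ∈ A, ∀ y ∈ A, x ≠ y → ∀ d ∈ A, (d, d) ∉ closure ((fun f => (f x, f y)) '' S)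

/-!
Let `E` be the closure, in the compact space of self-maps of the sphere, of `{id} ∪ {T̄ : T ∈ 𝔖}`.
Distality makes every element of `E` injective. For `f ∈ E`, the compact right-topological
semigroup `E f` contains an idempotent (Ellis–Numakura); being injective, it is the identity, so
`f` has a left inverse in `E`. Hence `E` contains `T̄⁻¹` along with `T̄`, so it contains `T̄` for
every `T` in the group generated by `𝔖`, and injectivity of the elements of the compact set `E`
gives distality of that group. This needs `T ↦ T̄` to be a homomorphism into continuous maps:
`T̄` differs from `x ↦ T x` by a power of `p`, which normalization forgets, and the ultrametric
norm is locally constant off `0`.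
-/

open Set Topology
open scoped Matrix

theorem Matrix.GeneralLinearGroup.mulVec_ne_zero {m K : Type*} [Fintype m] [DecidableEq m]
    [Field K] (T : GL m K) {x : m → K} (hx : x ≠ 0) : (T : Matrix m m K) *ᵥ x ≠ 0 :=
  (mulVec_injective_iff_isUnit.mpr T.isUnit).ne hx |>.trans_eq (mulVec_zero _)

theorem Function.End.eq_one_of_injective_of_mul_self {X : Type*} {u : Function.End X}
    (hu : Function.Injective u) (huu : u * u = u) : u = 1 :=
  funext fun x => hu (congrFun huu x)

section Distal

variable {X : Type*} [TopologicalSpace X]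

theorem ActsDistallyOn.mono {S T : Set (X → X)} {A : Set X} (hST : S ⊆ T)
    (hT : ActsDistallyOn T A) : ActsDistallyOn S A :=
  fun x hx y hy hxy d hd hmem => hT x hx y hy hxy d hd (closure_mono (image_mono hST) hmem)

theorem ActsDistallyOn.insert_id [T1Space X] {S : Set (X → X)} {A : Set X}
    (hS : ActsDistallyOn S A) : ActsDistallyOn (insert id S) A := by
  intro x hx y hy hxy d hd hmem
  rw [image_insert_eq, insert_eq, closure_union, closure_singleton] at hmem
  rcases hmem with hdxy | hmem
  · obtain ⟨rfl, rfl⟩ := Prod.mk.inj hdxy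
    exact hxy rfl
  · exact hS x hx y hy hxy d hd hmem

instance : TopologicalSpace (Function.End X) := inferInstanceAs (TopologicalSpace (X → X))

instance [CompactSpace X] : CompactSpace (Function.End X) :=
  inferInstanceAs (CompactSpace (X → X))

instance [T2Space X] : T2Space (Function.End X) := inferInstanceAs (T2Space (X → X))

theorem Function.End.continuous_mul_const (g : Function.End X) :
    Continuous fun f : Function.End X => f * g :=
  continuous_pi fun x => continuous_apply (g x)

theorem Function.End.continuous_const_mul {f : Function.End X} (hf : Continuous f) :
    Continuous fun g : Function.End X => f * g :=
  continuous_pi fun x => hf.comp (continuous_apply x)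

theorem Function.End.continuous_eval₂ (x y : X) :
    Continuous fun f : Function.End X => (f x, f y) :=
  (continuous_apply x).prodMk (continuous_apply y)

theorem ActsDistallyOn.injective_of_mem_closure {F : Set (Function.End X)}
    (hF : ActsDistallyOn F univ) {g : Function.End X} (hg : g ∈ closure F) :
    Function.Injective g := by
  intro x y hgxy
  by_contra hxy
  have hmem := map_mem_closure (Function.End.continuous_eval₂ x y) hg (mapsTo_image _ F)
  simp only [hgxy] at hmem
  exact hF x trivial y trivial hxy (g y) trivial hmem

theorem actsDistallyOn_univ_of_forall_injective [T2Space X] {F K : Set (Function.End X)}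
    (hFK : F ⊆ K) (hK : IsCompact K) (hinj : ∀ g ∈ K, Function.Injective g) :
    ActsDistallyOn F univ := by
  intro x _ y _ hxy d _ hmem
  have hKev := (hK.image (Function.End.continuous_eval₂ x y)).isClosed
  obtain ⟨g, hg, hgxy⟩ := closure_minimal (image_mono hFK) hKev hmem
  obtain ⟨hgx, hgy⟩ := Prod.mk.inj hgxy
  exact hxy (hinj g hg (hgx.trans hgy.symm))

theorem Function.End.mul_mem_closure {F : Set (Function.End X)}
    (hcont : ∀ f ∈ F, Continuous f) (hmul : ∀ f ∈ F, ∀ g ∈ F, f * g ∈ F)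
    {f g : Function.End X} (hf : f ∈ closure F) (hg : g ∈ closure F) : f * g ∈ closure F := by
  have hleft : MapsTo (· * g) F (closure F) := fun f' hf' =>
    MapsTo.closure (fun g' hg' => hmul f' hf' g' hg') (continuous_const_mul (hcont f' hf')) hg
  exact hleft.closure_left (continuous_mul_const g) isClosed_closure hf

theorem Function.End.exists_mul_eq_one [CompactSpace X] [T2Space X] {E : Set (Function.End X)}
    (hE : IsClosed E) (hmul : ∀ f ∈ E, ∀ g ∈ E, f * g ∈ E)
    (hinj : ∀ g ∈ E, Function.Injective g) {f : Function.End X} (hf : f ∈ E) :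
    ∃ g ∈ E, g * f = 1 := by
  obtain ⟨_, ⟨g, hg, rfl⟩, hidem⟩ := exists_idempotent_in_compact_subsemigroup
    continuous_mul_const ((· * f) '' E) ⟨f * f, f, hf, rfl⟩
    (hE.isCompact.image (continuous_mul_const f)) (by
      rintro _ ⟨g, hg, rfl⟩ _ ⟨h, hh, rfl⟩
      exact ⟨g * f * h, hmul _ (hmul g hg f hf) h hh, by simp only [mul_assoc]⟩)
  exact ⟨g, hg, eq_one_of_injective_of_mul_self (hinj _ (hmul g hg f hf)) hidem⟩

end Distal

section Group

variable {X G : Type*} [TopologicalSpace X] [CompactSpace X] [T2Space X] [Group G]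
  (φ : G →* Function.End X)

theorem image_subgroupClosure_subset_closure (hφ : ∀ g, Continuous (φ g)) (S : Subsemigroup G)
    (hS : ActsDistallyOn (φ '' S) univ) :
    φ '' Subgroup.closure (S : Set G) ⊆ closure (insert 1 (φ '' S)) := by
  -- `1` is adjoined so that `E` is a monoid even when `S` is empty.
  set E := closure (insert (1 : Function.End X) (φ '' S))
  have hmul : ∀ f ∈ E, ∀ g ∈ E, f * g ∈ E := by
    refine fun f hf g hg => Function.End.mul_mem_closure ?_ ?_ hf hg
    · rintro _ (rfl | ⟨T, -, rfl⟩)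
      exacts [continuous_id, hφ T]
    · rintro _ (rfl | ⟨T, hT, rfl⟩) _ (rfl | ⟨U, hU, rfl⟩)
      · exact .inl (mul_one 1)
      · exact .inr ⟨U, hU, one_mul _⟩
      · exact .inr ⟨T, hT, mul_one _⟩
      · exact .inr ⟨T * U, S.mul_mem hT hU, map_mul φ T U⟩
  have hinj : ∀ g ∈ E, Function.Injective g := fun _ hg =>
    hS.insert_id.injective_of_mem_closure hg
  rintro _ ⟨T, hT, rfl⟩
  induction hT using Subgroup.closure_induction with
  | mem T hT => exact subset_closure (.inr ⟨T, hT, rfl⟩)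
  | one => exact map_one φ ▸ subset_closure (mem_insert _ _)
  | mul T U _ _ hT hU => exact map_mul φ T U ▸ hmul _ hT _ hU
  | inv T _ hT =>
    obtain ⟨g, hg, hgT⟩ := Function.End.exists_mul_eq_one isClosed_closure hmul hinj hT
    have : g = φ T⁻¹ := by
      rw [← mul_one g, ← map_one φ, ← mul_inv_cancel T, map_mul, ← mul_assoc, hgT, one_mul]
    exact this ▸ hg

theorem actsDistallyOn_image_subgroupClosure_iff (hφ : ∀ g, Continuous (φ g))
    (S : Subsemigroup G) :
    ActsDistallyOn (φ '' S) univ ↔ ActsDistallyOn (φ '' Subgroup.closure (S : Set G)) univ :=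
  ⟨fun hS => actsDistallyOn_univ_of_forall_injective
      (image_subgroupClosure_subset_closure φ hφ S hS) isClosed_closure.isCompact
      fun _ hg => hS.insert_id.injective_of_mem_closure hg,
    ActsDistallyOn.mono (image_mono Subgroup.subset_closure)⟩

end Group

theorem actsDistallyOn_image_iff_univ {X ι : Type*} [TopologicalSpace X] {A : Set X}
    (f : ι → X → X) (ψ : ι → A → A) (hψ : ∀ i a, (ψ i a : X) = f i a) (s : Set ι) :
    ActsDistallyOn (f '' s) A ↔ ActsDistallyOn (ψ '' s) univ := by
  have hclosure : ∀ a b d : A, (d, d) ∈ closure ((fun g : A → A => (g a, g b)) '' (ψ '' s)) ↔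
      ((d : X), (d : X)) ∈ closure ((fun g : X → X => (g a, g b)) '' (f '' s)) := by
    intro a b d
    rw [(IsEmbedding.subtypeVal.prodMap IsEmbedding.subtypeVal).closure_eq_preimage_closure_image,
      image_image, image_image, image_image]
    simp only [Prod.map, hψ, mem_preimage]
  constructor
  · intro h a _ b _ hab d _ hmem
    exact h a a.2 b b.2 (Subtype.coe_ne_coe.mpr hab) d d.2 ((hclosure a b d).mp hmem)
  · intro h x hx y hy hxy d hd hmem
    exact h ⟨x, hx⟩ trivial ⟨y, hy⟩ trivial (fun h => hxy (congrArg Subtype.val h)) ⟨d, hd⟩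
      trivial ((hclosure ⟨x, hx⟩ ⟨y, hy⟩ ⟨d, hd⟩).mpr hmem)

noncomputable def padicNormalize (p : ℕ) [Fact p.Prime] {ι : Type*} [Fintype ι]
    (v : ι → ℚ_[p]) : ι → ℚ_[p] :=
  realToPadic p ‖v‖ • v

section Padic

variable {p : ℕ} [Fact p.Prime]

theorem realToPadic_zpow (k : ℤ) : realToPadic p ((p : ℝ) ^ k) = (p : ℚ_[p]) ^ k := by
  have hp : (1 : ℝ) < p := by exact_mod_cast (Fact.out : p.Prime).one_lt
  rw [realToPadic, ← Real.rpow_intCast, Real.logb_rpow (by linarith) hp.ne', Int.floor_intCast]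

variable {ι : Type*} [Fintype ι]

theorem Padic.exists_pi_norm_eq_zpow {v : ι → ℚ_[p]} (hv : v ≠ 0) :
    ∃ k : ℤ, ‖v‖ = (p : ℝ) ^ k := by
  obtain ⟨j, hj⟩ := Function.ne_iff.mp hv
  obtain ⟨i, -, hi⟩ := Finset.univ.exists_mem_eq_sup ⟨j, Finset.mem_univ j⟩ fun i => ‖v i‖₊
  have hvi : ‖v‖ = ‖v i‖ := by rw [Pi.norm_def, hi]; rfl
  have hi0 : v i ≠ 0 := norm_ne_zero_iff.mp (hvi ▸ norm_ne_zero_iff.mpr hv)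
  exact ⟨-(v i).valuation, by rw [hvi, Padic.norm_eq_zpow_neg_valuation hi0]⟩

theorem padicNormalize_eq_zpow_smul {v : ι → ℚ_[p]} {k : ℤ} (hv : ‖v‖ = (p : ℝ) ^ k) :
    padicNormalize p v = (p : ℚ_[p]) ^ k • v := by
  rw [padicNormalize, hv, realToPadic_zpow]

theorem exists_padicNormalize_eq_zpow_smul (v : ι → ℚ_[p]) :
    ∃ k : ℤ, padicNormalize p v = (p : ℚ_[p]) ^ k • v := by
  rcases eq_or_ne v 0 with rfl | hv
  · exact ⟨0, by simp [padicNormalize]⟩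
  · obtain ⟨k, hk⟩ := Padic.exists_pi_norm_eq_zpow hv
    exact ⟨k, padicNormalize_eq_zpow_smul hk⟩

theorem norm_padicNormalize {v : ι → ℚ_[p]} (hv : v ≠ 0) : ‖padicNormalize p v‖ = 1 := by
  have hp : (p : ℝ) ≠ 0 := by exact_mod_cast (Fact.out : p.Prime).ne_zero
  obtain ⟨k, hk⟩ := Padic.exists_pi_norm_eq_zpow hv
  rw [padicNormalize_eq_zpow_smul hk, norm_smul, Padic.norm_p_zpow, hk, ← zpow_add₀ hp,
    neg_add_cancel, zpow_zero]

theorem padicNormalize_zpow_smul (k : ℤ) (v : ι → ℚ_[p]) :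
    padicNormalize p ((p : ℚ_[p]) ^ k • v) = padicNormalize p v := by
  have hp : (p : ℝ) ≠ 0 := by exact_mod_cast (Fact.out : p.Prime).ne_zero
  have hp' : (p : ℚ_[p]) ≠ 0 := by exact_mod_cast (Fact.out : p.Prime).ne_zero
  rcases eq_or_ne v 0 with rfl | hv
  · rw [smul_zero]
  obtain ⟨m, hm⟩ := Padic.exists_pi_norm_eq_zpow hv
  have hkm : ‖(p : ℚ_[p]) ^ k • v‖ = (p : ℝ) ^ (-k + m) := by
    rw [norm_smul, Padic.norm_p_zpow, hm, zpow_add₀ hp]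
  rw [padicNormalize_eq_zpow_smul hkm, padicNormalize_eq_zpow_smul hm, smul_smul,
    ← zpow_add₀ hp', neg_add_cancel_comm]

theorem padicNormalize_of_norm_eq_one {v : ι → ℚ_[p]} (hv : ‖v‖ = 1) :
    padicNormalize p v = v := by
  rw [padicNormalize_eq_zpow_smul (k := 0) (by rw [hv, zpow_zero]), zpow_zero, one_smul]

/-- The ultrametric norm is locally constant off `0`, so near `v` the map `padicNormalize p` is
multiplication by the constant `realToPadic p ‖v‖`. -/
theorem continuousAt_padicNormalize {v : ι → ℚ_[p]} (hv : v ≠ 0) :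
    ContinuousAt (padicNormalize p) v := by
  have hsphere : Metric.sphere (0 : ι → ℚ_[p]) ‖v‖ ∈ 𝓝 v :=
    (IsUltrametricDist.isOpen_sphere (x := 0) (norm_ne_zero_iff.mpr hv)).mem_nhds (by simp)
  refine ((continuous_const_smul (realToPadic p ‖v‖)).continuousAt).congr ?_
  filter_upwards [hsphere] with w hw
  rw [padicNormalize, mem_sphere_zero_iff_norm.mp hw]

end Padic

section Sphere

variable {p : ℕ} [Fact p.Prime] {n : ℕ}

theorem sphereMap_mul (M N : Matrix (Fin n) (Fin n) ℚ_[p]) (x : Fin n → ℚ_[p]) :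
    sphereMap p (M * N) x = sphereMap p M (sphereMap p N x) := by
  obtain ⟨k, hk⟩ := exists_padicNormalize_eq_zpow_smul (N *ᵥ x)
  change padicNormalize p _ = padicNormalize p (M *ᵥ padicNormalize p (N *ᵥ x))
  rw [hk, Matrix.mulVec_smul, padicNormalize_zpow_smul, Matrix.mulVec_mulVec]

theorem sphereMap_one {x : Fin n → ℚ_[p]} (hx : ‖x‖ = 1) : sphereMap p 1 x = x := by
  change padicNormalize p _ = x
  rw [Matrix.one_mulVec, padicNormalize_of_norm_eq_one hx]

theorem norm_sphereMap (T : GL (Fin n) ℚ_[p]) {x : Fin n → ℚ_[p]} (hx : x ≠ 0) :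
    ‖sphereMap p T x‖ = 1 :=
  norm_padicNormalize (T.mulVec_ne_zero hx)

theorem continuousAt_sphereMap (T : GL (Fin n) ℚ_[p]) {x : Fin n → ℚ_[p]} (hx : x ≠ 0) :
    ContinuousAt (sphereMap p T) x :=
  (continuousAt_padicNormalize (T.mulVec_ne_zero hx)).comp
    (continuous_const.matrix_mulVec continuous_id).continuousAt

noncomputable def sphereEnd (p : ℕ) [Fact p.Prime] (n : ℕ) :
    GL (Fin n) ℚ_[p] →* Function.End (Metric.sphere (0 : Fin n → ℚ_[p]) 1) where
  toFun T x := ⟨sphereMap p T x,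
    mem_sphere_zero_iff_norm.mpr (norm_sphereMap T (ne_zero_of_mem_unit_sphere x))⟩
  map_one' := funext fun x => Subtype.ext (sphereMap_one (norm_eq_of_mem_sphere x))
  map_mul' _ _ := funext fun _ => Subtype.ext (sphereMap_mul _ _ _)

theorem continuous_sphereEnd (T : GL (Fin n) ℚ_[p]) : Continuous (sphereEnd p n T) :=
  (continuous_iff_continuousAt.mpr fun x => (continuousAt_sphereMap T
    (ne_zero_of_mem_unit_sphere x)).comp continuous_subtype_val.continuousAt).subtype_mk _

end Sphere

theorem stmt7_general (p : ℕ) [Fact p.Prime] (n : ℕ)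
    (𝔖 : Subsemigroup (GL (Fin n) ℚ_[p])) :
    ActsDistallyOn {f : (Fin n → ℚ_[p]) → Fin n → ℚ_[p] |
        ∃ T ∈ 𝔖, f = sphereMap p (T : Matrix (Fin n) (Fin n) ℚ_[p])}
      (Metric.sphere (0 : Fin n → ℚ_[p]) 1) ↔
      ActsDistallyOn {f : (Fin n → ℚ_[p]) → Fin n → ℚ_[p] |
          ∃ T ∈ Subgroup.closure (𝔖 : Set (GL (Fin n) ℚ_[p])),
            f = sphereMap p (T : Matrix (Fin n) (Fin n) ℚ_[p])}
        (Metric.sphere (0 : Fin n → ℚ_[p]) 1) := by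
  have hrestrict (H : Set (GL (Fin n) ℚ_[p])) :
      ActsDistallyOn {f | ∃ T ∈ H, f = sphereMap p (T : Matrix (Fin n) (Fin n) ℚ_[p])}
        (Metric.sphere (0 : Fin n → ℚ_[p]) 1) ↔ ActsDistallyOn (sphereEnd p n '' H) univ := by
    have hset : {f | ∃ T ∈ H, f = sphereMap p (T : Matrix (Fin n) (Fin n) ℚ_[p])} =
        (fun T : GL (Fin n) ℚ_[p] => sphereMap p (T : Matrix (Fin n) (Fin n) ℚ_[p])) '' H := by
      simp only [Set.image, eq_comm]
    rw [hset]
    exact actsDistallyOn_image_iff_univ _ (sphereEnd p n) (fun _ _ => rfl) H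
  exact (hrestrict 𝔖).trans <|
    (actsDistallyOn_image_subgroupClosure_iff _ continuous_sphereEnd 𝔖).trans (hrestrict _).symm

/-- For a subsemigroup `𝔖` of `GL(n, ℚ_p)`, the family `{T̄ : T ∈ 𝔖}` acts distally on the
`p`-adic unit sphere iff the family `{T̄ : T ∈ G}` does, where `G` is the subgroup generated
by `𝔖`. -/
theorem stmt7 (p : ℕ) [Fact p.Prime] (n : ℕ) (hn : 1 ≤ n)
    (𝔖 : Subsemigroup (GL (Fin n) ℚ_[p])) :
    ActsDistallyOn {f : (Fin n → ℚ_[p]) → Fin n → ℚ_[p] |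
        ∃ T ∈ 𝔖, f = sphereMap p (T : Matrix (Fin n) (Fin n) ℚ_[p])}
      (Metric.sphere (0 : Fin n → ℚ_[p]) 1) ↔
      ActsDistallyOn {f : (Fin n → ℚ_[p]) → Fin n → ℚ_[p] |
          ∃ T ∈ Subgroup.closure (𝔖 : Set (GL (Fin n) ℚ_[p])),
            f = sphereMap p (T : Matrix (Fin n) (Fin n) ℚ_[p])}
        (Metric.sphere (0 : Fin n → ℚ_[p]) 1) :=
  stmt7_general p n 𝔖
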